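/- Assume: Ψ(r,R) = ψ₃₀r³ + ψ₂₁r²R + ψ₁₂rR² + ψ₀₃R³ + o((|r|+|R|)³) and ∂Ψ/∂r(r,R) = 3ψ₃₀r² + 2ψ₂₁rR + ψ₁₂R² + o((|r|+|R|)²) as (r,R)→(0,0), with ψ₃₀ > 0; Y(r,R) = 1 + y₂₀r² + y₁₁rR + y₀₂R² + o((|r|+|R|)²); Q(r) = q₀r^{2+p} + o(r^{2+p}) and Q'(r) = (2+p)q₀r^{1+p} + o(r^{1+p}) as r→0⁺, with q₀ ≠ 0 and real p > 1. Define Ψ₁ := Ψ − Q²/(2R), Y₁ := (1 − QQ'/(R·∂Ψ/∂r))·Y, and u₁² := 2Ψ₁/R − 1 + Y₁². Then for every k > 0, lim_{r→0⁺} (kr^{2p+1})·u₁²(r,kr^{2p+1})/r³ = 2ψ₃₀ − q₀²/k; in particular this limit vanishes exactly when k = q₀²/(2ψ₃₀). -/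

import Mathlib

/-!
Along `R = k r^{2p+1}` the curve is tangent to the `r`-axis, so every `o((|r|+|R|)^n)` remainder
becomes `o(r^n)` and the Taylor data give `Ψ ≈ ψ₃₀ r³`, `∂Ψ/∂r ≈ 3ψ₃₀ r²`, `Y → 1`. Dividing by
`r³`, the term `R u₁²` splits as `2Ψ/r³ − Q²/(R r³) − R/r³ + (R/r³) Y₁²`. Since
`Q² ≈ q₀² r^{4+2p} = q₀² r³ · r^{2p+1}`, the second term tends to `q₀²/k`; since `p > 1`,
`R/r³ = k r^{2p−2} → 0`, while `QQ'/(R ∂Ψ/∂r)` tends to the finite value `(2+p)q₀²/(3kψ₃₀)`, so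
`Y₁` stays bounded and the last two terms vanish in the limit.
-/

open Filter Topology Asymptotics

/-- The charged velocity function
`u₁²(r,R) = 2Ψ₁/R − 1 + Y₁²`, with `Ψ₁ = Ψ − Q²/(2R)` and
`Y₁ = (1 − QQ'/(R·∂Ψ/∂r))·Y`. -/
noncomputable def u1sq (Ψ Ψr Y : ℝ → ℝ → ℝ) (Q Q' : ℝ → ℝ) (r R : ℝ) : ℝ :=
  2 * (Ψ r R - Q r ^ 2 / (2 * R)) / R - 1
    + ((1 - Q r * Q' r / (R * Ψr r R)) * Y r R) ^ 2

variable {α 𝕜 E F : Type*} {l : Filter α}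

theorem tendsto_div_of_isLittleO_sub [NormedField 𝕜] {f F g : α → 𝕜} {c : 𝕜}
    (h : (fun x => f x - F x) =o[l] g) (hF : Tendsto (fun x => F x / g x) l (𝓝 c)) :
    Tendsto (fun x => f x / g x) l (𝓝 c) := by
  simpa only [sub_div, sub_add_cancel, zero_add] using h.tendsto_div_nhds_zero.add hF

theorem tendsto_div_of_isLittleO_sub_const_mul [NormedField 𝕜] {f g : α → 𝕜} {c : 𝕜}
    (h : (fun x => f x - c * g x) =o[l] g) (hg : ∀ᶠ x in l, g x ≠ 0) :
    Tendsto (fun x => f x / g x) l (𝓝 c) :=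
  tendsto_div_of_isLittleO_sub h <| tendsto_const_nhds.congr' <| by
    filter_upwards [hg] with x hx using (mul_div_cancel_right₀ c hx).symm

theorem tendsto_of_isLittleO_sub [NormedAddCommGroup E] [NormedAddCommGroup F]
    {f G : α → E} {g : α → F} {c : E}
    (h : (fun x => f x - G x) =o[l] g) (hg : Tendsto g l (𝓝 0)) (hG : Tendsto G l (𝓝 c)) :
    Tendsto f l (𝓝 c) := by
  simpa only [sub_add_cancel, zero_add] using (h.trans_tendsto hg).add hG

section Graph

variable {l : Filter ℝ} {g : ℝ → ℝ}

theorem tendsto_graph_of_isLittleO (hl : l ≤ 𝓝 0) (hg : g =o[l] fun r => r) :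
    Tendsto (fun r => (r, g r)) l (𝓝 ((0 : ℝ), (0 : ℝ))) := by
  have hid : Tendsto (fun r : ℝ => r) l (𝓝 0) := tendsto_id.mono_left hl
  exact hid.prodMk_nhds (hg.trans_tendsto hid)

theorem Asymptotics.IsLittleO.comp_graph {f : ℝ × ℝ → ℝ} {n : ℕ}
    (hf : f =o[𝓝 (0, 0)] fun q => (|q.1| + |q.2|) ^ n) (hl : l ≤ 𝓝 0) (hg : g =o[l] fun r => r) :
    (fun r => f (r, g r)) =o[l] fun r => r ^ n := by
  have hsum : (fun r => |r| + |g r|) =O[l] fun r => r :=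
    (isBigO_abs_left.mpr (isBigO_refl _ _)).add (isBigO_abs_left.mpr hg.isBigO)
  exact (hf.comp_tendsto (tendsto_graph_of_isLittleO hl hg)).trans_isBigO (hsum.pow n)

theorem tendsto_comp_graph_div_pow {f F : ℝ × ℝ → ℝ} {P : ℝ → ℝ} {n : ℕ} {c : ℝ}
    (hl : l ≤ 𝓝[≠] 0) (hg : g =o[l] fun r => r) (hP : Tendsto P (𝓝 0) (𝓝 c))
    (hF : ∀ r s, F (r, s * r) = r ^ n * P s)
    (hf : (fun q => f q - F q) =o[𝓝 (0, 0)] fun q => (|q.1| + |q.2|) ^ n) :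
    Tendsto (fun r => f (r, g r) / r ^ n) l (𝓝 c) := by
  refine tendsto_div_of_isLittleO_sub (hf.comp_graph (hl.trans nhdsWithin_le_nhds) hg) ?_
  refine (hP.comp hg.tendsto_div_nhds_zero).congr' ?_
  filter_upwards [hl self_mem_nhdsWithin] with r (hr : r ≠ 0)
  rw [Function.comp_apply, ← div_mul_cancel₀ (g r) hr, hF, div_mul_cancel₀ (g r) hr,
    mul_div_cancel_left₀ _ (pow_ne_zero n hr)]

end Graph

theorem tendsto_rpow_const_nhds_zero {a : ℝ} (ha : 0 < a) :
    Tendsto (fun r : ℝ => r ^ a) (𝓝 0) (𝓝 0) := by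
  simpa only [Real.zero_rpow ha.ne'] using
    (Real.continuousAt_rpow_const 0 a (Or.inr ha.le)).tendsto

theorem const_mul_rpow_isLittleO_id {k a : ℝ} (ha : 1 < a) :
    (fun r : ℝ => k * r ^ a) =o[𝓝[>] 0] fun r => r := by
  have hsmall : (fun r : ℝ => k * r ^ (a - 1)) =o[𝓝[>] 0] fun _ => (1 : ℝ) :=
    (isLittleO_one_iff ℝ).mpr <| by
      simpa using ((tendsto_rpow_const_nhds_zero (sub_pos.mpr ha)).const_mul k).mono_left
        nhdsWithin_le_nhds
  refine (hsmall.mul_isBigO (isBigO_refl (fun r : ℝ => r) _)).congr' ?_ (by simp)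
  filter_upwards [self_mem_nhdsWithin] with r (hr : 0 < r)
  rw [mul_assoc, ← Real.rpow_add_one hr.ne', sub_add_cancel]

theorem mul_u1sq_div_pow_three_eq (Ψ Ψr Y : ℝ → ℝ → ℝ) (Q Q' : ℝ → ℝ) {k p r : ℝ}
    (hk : k ≠ 0) (hr : 0 < r) :
    k * r ^ (2*p+1) * u1sq Ψ Ψr Y Q Q' r (k * r ^ (2*p+1)) / r ^ 3 =
      2 * (Ψ r (k * r ^ (2*p+1)) / r ^ 3) - (Q r / r ^ (2+p)) ^ 2 / k - k * r ^ (2*p-2)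
        + k * r ^ (2*p-2) * ((1 - Q r / r ^ (2+p) * (Q' r / r ^ (1+p))
          / (k * (Ψr r (k * r ^ (2*p+1)) / r ^ 2))) * Y r (k * r ^ (2*p+1))) ^ 2 := by
  have hpow (a b : ℝ) (n : ℕ) (h : a = b + n) : r ^ a = r ^ b * r ^ n := by
    rw [h, Real.rpow_add_natCast hr.ne']
  have e1 : r ^ (2*p+1) = r ^ (2*p-2) * r ^ 3 := hpow _ _ 3 (by push_cast; ring)
  have e2 : (r ^ (2+p)) ^ 2 = r ^ (2*p-2) * r ^ 6 := by
    rw [sq, ← Real.rpow_add hr]; exact hpow _ _ 6 (by push_cast; ring)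
  have e3 : r ^ (2+p) * r ^ (1+p) = r ^ (2*p-2) * r ^ 5 := by
    rw [← Real.rpow_add hr]; exact hpow _ _ 5 (by push_cast; ring)
  set R := k * r ^ (2*p+1) with hR
  have hQQ : Q r * Q' r / (R * Ψr r R)
      = Q r / r ^ (2+p) * (Q' r / r ^ (1+p)) / (k * (Ψr r R / r ^ 2)) := by
    rw [div_mul_div_comm, div_div, e3, hR, e1]
    congr 1
    field_simp
  simp only [u1sq]
  rw [hQQ, div_pow, e2, hR, e1]
  field_simp

theorem two_mul_sub_div_eq_zero_iff {ψ q k : ℝ} (hψ : ψ ≠ 0) (hk : k ≠ 0) :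
    2 * ψ - q ^ 2 / k = 0 ↔ k = q ^ 2 / (2 * ψ) := by
  rw [sub_eq_zero, eq_div_iff hk, eq_div_iff (mul_ne_zero two_ne_zero hψ), mul_comm]

theorem curve_kr2p1_limit_u1sq_general
    (Ψ Ψr Y : ℝ → ℝ → ℝ) (Q Q' : ℝ → ℝ)
    (ψ30 ψ21 ψ12 ψ03 y20 y11 y02 q0 p : ℝ)
    (hψ30 : 0 < ψ30) (hp : 1 < p)
    (hΨ : (fun q : ℝ × ℝ =>
        Ψ q.1 q.2 - (ψ30*q.1^3 + ψ21*q.1^2*q.2 + ψ12*q.1*q.2^2 + ψ03*q.2^3))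
      =o[nhds ((0:ℝ), (0:ℝ))] fun q : ℝ × ℝ => (|q.1| + |q.2|)^3)
    (hΨr : (fun q : ℝ × ℝ =>
        Ψr q.1 q.2 - (3*ψ30*q.1^2 + 2*ψ21*q.1*q.2 + ψ12*q.2^2))
      =o[nhds ((0:ℝ), (0:ℝ))] fun q : ℝ × ℝ => (|q.1| + |q.2|)^2)
    (hY : (fun q : ℝ × ℝ =>
        Y q.1 q.2 - (1 + y20*q.1^2 + y11*q.1*q.2 + y02*q.2^2))
      =o[nhds ((0:ℝ), (0:ℝ))] fun q : ℝ × ℝ => (|q.1| + |q.2|)^2)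
    (hQ : (fun r : ℝ => Q r - q0 * r ^ (2+p)) =o[𝓝[>] (0:ℝ)] fun r : ℝ => r ^ (2+p))
    (hQ' : (fun r : ℝ => Q' r - (2+p) * q0 * r ^ (1+p))
      =o[𝓝[>] (0:ℝ)] fun r : ℝ => r ^ (1+p)) :
    ∀ k : ℝ, 0 < k →
      Tendsto (fun r : ℝ =>
          (k * r ^ (2*p+1)) * u1sq Ψ Ψr Y Q Q' r (k * r ^ (2*p+1)) / r^3)
        (𝓝[>] (0:ℝ)) (𝓝 (2*ψ30 - q0^2 / k)) ∧
      (2*ψ30 - q0^2 / k = 0 ↔ k = q0^2 / (2*ψ30)) := by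
  intro k hk
  refine ⟨?_, two_mul_sub_div_eq_zero_iff hψ30.ne' hk.ne'⟩
  have hl : 𝓝[>] (0:ℝ) ≤ 𝓝[≠] 0 := nhdsGT_le_nhdsNE 0
  have hcurve := const_mul_rpow_isLittleO_id (k := k) (a := 2*p+1) (by linarith)
  have hpos : ∀ᶠ r : ℝ in 𝓝[>] 0, 0 < r := self_mem_nhdsWithin
  have hΨ₀ : Tendsto (fun r => Ψ r (k * r ^ (2*p+1)) / r ^ 3) (𝓝[>] 0) (𝓝 ψ30) :=
    tendsto_comp_graph_div_pow (f := fun q => Ψ q.1 q.2) hl hcurve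
      ((by fun_prop : Continuous fun s => ψ30 + ψ21*s + ψ12*s^2 + ψ03*s^3).tendsto' _ _ (by ring))
      (fun r s => by ring) hΨ
  have hΨr₀ : Tendsto (fun r => Ψr r (k * r ^ (2*p+1)) / r ^ 2) (𝓝[>] 0) (𝓝 (3*ψ30)) :=
    tendsto_comp_graph_div_pow (f := fun q => Ψr q.1 q.2) hl hcurve
      ((by fun_prop : Continuous fun s => 3*ψ30 + 2*ψ21*s + ψ12*s^2).tendsto' _ _ (by ring))
      (fun r s => by ring) hΨr
  have hY₀ : Tendsto (fun q : ℝ × ℝ => Y q.1 q.2) (𝓝 (0, 0)) (𝓝 1) :=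
    tendsto_of_isLittleO_sub hY ((by fun_prop : Continuous _).tendsto' _ _ (by simp))
      ((by fun_prop : Continuous _).tendsto' _ _ (by simp))
  have hQ₀ := tendsto_div_of_isLittleO_sub_const_mul hQ
    (hpos.mono fun r hr => (Real.rpow_pos_of_pos hr _).ne')
  have hQ'₀ := tendsto_div_of_isLittleO_sub_const_mul hQ'
    (hpos.mono fun r hr => (Real.rpow_pos_of_pos hr _).ne')
  have hsmall : Tendsto (fun r : ℝ => k * r ^ (2*p-2)) (𝓝[>] 0) (𝓝 0) := by
    simpa using ((tendsto_rpow_const_nhds_zero (by linarith : (0:ℝ) < 2*p-2)).const_mul k).mono_left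
      nhdsWithin_le_nhds
  have hlim := (((hΨ₀.const_mul 2).sub ((hQ₀.pow 2).div_const k)).sub hsmall).add
    (hsmall.mul ((((tendsto_const_nhds (x := (1:ℝ))).sub ((hQ₀.mul hQ'₀).div (hΨr₀.const_mul k)
      (by positivity))).mul (hY₀.comp (tendsto_graph_of_isLittleO nhdsWithin_le_nhds hcurve))).pow 2))
  rw [zero_mul, add_zero, sub_zero] at hlim
  exact hlim.congr' (hpos.mono fun r hr => (mul_u1sq_div_pow_three_eq Ψ Ψr Y Q Q' hk.ne' hr).symm)

/-- Behavior of `R·u₁²` along the curves `R = k r^{2p+1}` in the case `p > 1`: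
`(kr^{2p+1})·u₁²(r,kr^{2p+1}) = (2ψ₃₀ − q₀²/k)·r³ + o(r³)`, with the limit
vanishing exactly when `k = q₀²/(2ψ₃₀)`. -/
theorem curve_kr2p1_limit_u1sq
    (Ψ Ψr Y : ℝ → ℝ → ℝ) (Q Q' : ℝ → ℝ)
    (ψ30 ψ21 ψ12 ψ03 y20 y11 y02 q0 p : ℝ)
    (hψ30 : 0 < ψ30) (hq0 : q0 ≠ 0) (hp : 1 < p)
    (hlink : ∀ r R, HasDerivAt (fun s => Ψ s R) (Ψr r R) r)
    (hQd : ∀ r, HasDerivAt Q (Q' r) r)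
    (hΨ : (fun q : ℝ × ℝ =>
        Ψ q.1 q.2 - (ψ30*q.1^3 + ψ21*q.1^2*q.2 + ψ12*q.1*q.2^2 + ψ03*q.2^3))
      =o[nhds ((0:ℝ), (0:ℝ))] fun q : ℝ × ℝ => (|q.1| + |q.2|)^3)
    (hΨr : (fun q : ℝ × ℝ =>
        Ψr q.1 q.2 - (3*ψ30*q.1^2 + 2*ψ21*q.1*q.2 + ψ12*q.2^2))
      =o[nhds ((0:ℝ), (0:ℝ))] fun q : ℝ × ℝ => (|q.1| + |q.2|)^2)
    (hY : (fun q : ℝ × ℝ =>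
        Y q.1 q.2 - (1 + y20*q.1^2 + y11*q.1*q.2 + y02*q.2^2))
      =o[nhds ((0:ℝ), (0:ℝ))] fun q : ℝ × ℝ => (|q.1| + |q.2|)^2)
    (hQ : (fun r : ℝ => Q r - q0 * r ^ (2+p)) =o[𝓝[>] (0:ℝ)] fun r : ℝ => r ^ (2+p))
    (hQ' : (fun r : ℝ => Q' r - (2+p) * q0 * r ^ (1+p))
      =o[𝓝[>] (0:ℝ)] fun r : ℝ => r ^ (1+p)) :
    ∀ k : ℝ, 0 < k →
      Tendsto (fun r : ℝ =>
          (k * r ^ (2*p+1)) * u1sq Ψ Ψr Y Q Q' r (k * r ^ (2*p+1)) / r^3)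
        (𝓝[>] (0:ℝ)) (𝓝 (2*ψ30 - q0^2 / k)) ∧
      (2*ψ30 - q0^2 / k = 0 ↔ k = q0^2 / (2*ψ30)) :=
  curve_kr2p1_limit_u1sq_general Ψ Ψr Y Q Q' ψ30 ψ21 ψ12 ψ03 y20 y11 y02 q0 p hψ30 hp hΨ hΨr hY hQ
    hQ'
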